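/- For every n ≥ 2, δₙ(2n+1) = 9 + 2·δ_{n-1}(2n+1); that is, the number of occurrences of 2n+1 at level n equals 9 plus twice its number of occurrences at level n−1. -/

import Mathlib

/-!
Appending a letter `i` sends `w = Δ I` to `(w i, w (i + 1), w 0 + w 1 + w 2)` (indices in `Fin 3`).
So, as `i` ranges over the three letters, the first two coordinates at level `n + 1` each run once
through all coordinates at level `n`, while the third is the coordinate sum at level `n`, taken
three times. All coordinates are `≥ 1` and each append adds two of them to the sum, so the sum at
level `n` is at least `2n + 3`. For `n ≥ 1` equality propagates only through `A₀`, the one matrix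
picking the two entries equal to `1` of `(1, 1, 2n + 1)`; thus exactly three words (free first
letter, then all `0`) reach it, and `δ_{n+1}(2n+3) = 2 δ_n(2n+3) + 3 · 3`.
-/

open Matrix

/-- The three Farey matrices `A₀, A₁, A₂`. -/
def A : Fin 3 → Matrix (Fin 3) (Fin 3) ℤ :=
  ![!![1,0,1; 0,1,1; 0,0,1],
    !![0,0,1; 1,0,1; 0,1,1],
    !![0,1,1; 0,0,1; 1,0,1]]

/-- `Δ I = (v₁(I), v₂(I), v₃(I)) = (1,1,1)·A_{i₁}·⋯·A_{iₙ}`. -/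
def Δ (I : List (Fin 3)) : Fin 3 → ℤ :=
  Matrix.vecMul ![1,1,1] ((I.map A).prod)


/-- `δ n j m` : the number of tuples `I ∈ {0,1,2}ⁿ` with `v_{j+1}(I) = m`. -/
def δ (n : ℕ) (j : Fin 3) (m : ℤ) : ℕ :=
  (Finset.univ.filter (fun f : Fin n → Fin 3 => Δ (List.ofFn f) j = m)).card

/-- `δtot n m` : the number of occurrences of `m` at level `n`. -/
def δtot (n : ℕ) (m : ℤ) : ℕ := δ n 0 m + δ n 1 m + δ n 2 m


open Finset

section

variable (w : Fin 3 → ℤ) (i : Fin 3)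

lemma vecMul_A_zero : vecMul w (A i) 0 = w i := by
  fin_cases i <;> simp [A, vecMul, dotProduct, Fin.sum_univ_three]

lemma vecMul_A_one : vecMul w (A i) 1 = w (i + 1) := by
  fin_cases i <;> simp [A, vecMul, dotProduct, Fin.sum_univ_three]

lemma vecMul_A_two : vecMul w (A i) 2 = ∑ j, w j := by
  fin_cases i <;> simp [A, vecMul, dotProduct, Fin.sum_univ_three]

variable (I : List (Fin 3))

lemma Δ_nil : Δ [] = 1 := by
  ext j; fin_cases j <;> rfl

lemma Δ_append_singleton : Δ (I ++ [i]) = vecMul (Δ I) (A i) := by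
  simp [Δ, vecMul_vecMul]

lemma sum_Δ_append_singleton : ∑ j, Δ (I ++ [i]) j = Δ I i + Δ I (i + 1) + ∑ j, Δ I j := by
  rw [Fin.sum_univ_three, Δ_append_singleton, vecMul_A_zero, vecMul_A_one, vecMul_A_two]

lemma one_le_Δ (j : Fin 3) : 1 ≤ Δ I j := by
  induction I using List.reverseRecOn generalizing j with
  | nil => simp [Δ_nil]
  | append_singleton I i ih =>
    rw [Δ_append_singleton]
    fin_cases j
    · simpa [vecMul_A_zero] using ih i
    · simpa [vecMul_A_one] using ih (i + 1)
    · simp only [Fin.reduceFinMk, vecMul_A_two, Fin.sum_univ_three]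
      linarith [ih 0, ih 1, ih 2]

lemma two_mul_length_add_three_le_sum_Δ : 2 * I.length + 3 ≤ ∑ j, Δ I j := by
  induction I using List.reverseRecOn with
  | nil => simp [Δ_nil]
  | append_singleton I i ih =>
    rw [sum_Δ_append_singleton, List.length_append, List.length_singleton]
    push_cast
    linarith [one_le_Δ I i, one_le_Δ I (i + 1)]

lemma two_mul_length_add_one_le_Δ_two (hI : I ≠ []) : 2 * I.length + 1 ≤ Δ I 2 := by
  obtain ⟨J, i, rfl⟩ := (List.eq_nil_or_concat I).resolve_left hI
  rw [List.concat_eq_append, Δ_append_singleton, vecMul_A_two, List.length_append,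
    List.length_singleton]
  push_cast
  linarith [two_mul_length_add_three_le_sum_Δ J]

lemma sum_Δ_eq_iff : ∑ j, Δ I j = 2 * I.length + 3 ↔ ∀ x ∈ I.tail, x = 0 := by
  induction I using List.reverseRecOn with
  | nil => simp [Δ_nil]
  | append_singleton I i ih =>
    rcases eq_or_ne I [] with rfl | hI
    · rw [sum_Δ_append_singleton, Δ_nil]
      simp
    rw [sum_Δ_append_singleton, List.tail_append_of_ne_nil hI, List.length_append,
      List.length_singleton]
    simp only [List.mem_append, List.mem_singleton, or_imp, forall_and, forall_eq, ← ih]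
    have hlen : 0 < I.length := List.length_pos_iff.mpr hI
    have h0 := one_le_Δ I 0
    have h1 := one_le_Δ I 1
    have h2 := two_mul_length_add_one_le_Δ_two I hI
    rw [Fin.sum_univ_three]
    fin_cases i <;> simp <;> omega

lemma card_sum_Δ_eq (p : ℕ) :
    #{g : Fin (p + 1) → Fin 3 | ∑ j, Δ (List.ofFn g) j = 2 * p + 5} = 3 := by
  have : ({g | ∑ j, Δ (List.ofFn g) j = 2 * p + 5} : Finset (Fin (p + 1) → Fin 3)) =
      univ.image (fun a => Fin.cons a 0) := by
    ext g
    have hvalue : (2 * p + 5 : ℤ) = 2 * (List.ofFn g).length + 3 := by simp; ring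
    simp only [mem_filter, mem_univ, true_and, mem_image, hvalue, sum_Δ_eq_iff, List.ofFn_succ,
      List.tail_cons, List.forall_mem_ofFn_iff]
    constructor
    · intro h
      exact ⟨g 0, funext fun k => Fin.cases rfl (fun k => (h k).symm) k⟩
    · rintro ⟨a, rfl⟩ k
      rfl
  rw [this, card_image_of_injective _ (Fin.cons_left_injective 0), card_univ, Fintype.card_fin]

lemma δ_succ (n : ℕ) (j : Fin 3) (m : ℤ) :
    δ (n + 1) j m = ∑ i, #{g : Fin n → Fin 3 | Δ (List.ofFn g ++ [i]) j = m} := by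
  simp only [δ, card_filter]
  rw [← (Fin.snocEquiv fun _ => Fin 3).sum_comp, Fintype.sum_prod_type]
  simp only [Fin.snocEquiv_apply, List.ofFn_succ_last, Fin.snoc_castSucc, Fin.snoc_last]

lemma δ_succ_zero (n : ℕ) (m : ℤ) : δ (n + 1) 0 m = δtot n m := by
  rw [δ_succ, Fin.sum_univ_three]
  simp only [Δ_append_singleton, vecMul_A_zero]
  rfl

lemma δ_succ_one (n : ℕ) (m : ℤ) : δ (n + 1) 1 m = δtot n m := by
  rw [δ_succ, Fin.sum_univ_three]
  simp only [Δ_append_singleton, vecMul_A_one, Fin.reduceAdd]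
  rw [δtot, δ, δ, δ]
  ring

lemma δ_succ_two (n : ℕ) (m : ℤ) :
    δ (n + 1) 2 m = 3 * #{g : Fin n → Fin 3 | ∑ j, Δ (List.ofFn g) j = m} := by
  simp only [δ_succ, Δ_append_singleton, vecMul_A_two, sum_const, card_univ, Fintype.card_fin,
    smul_eq_mul]

end

theorem stmt10 (n : ℕ) (hn : 2 ≤ n) :
    δtot n (2 * (n : ℤ) + 1) = 9 + 2 * δtot (n - 1) (2 * (n : ℤ) + 1) := by
  obtain ⟨p, rfl⟩ := Nat.exists_eq_add_of_le' hn
  have hm : 2 * ((p + 2 : ℕ) : ℤ) + 1 = 2 * p + 5 := by push_cast; ring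
  rw [hm, δtot, δ_succ_zero, δ_succ_one, δ_succ_two, card_sum_Δ_eq,
    show p + 2 - 1 = p + 1 by omega]
  ring
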